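/- Let N ≥ 1. Let (A_n) be a sequence of N×N real row-stochastic matrices converging entrywise to a row-stochastic matrix A. Assume that the kernel of I − A (acting on column vectors) is exactly the one-dimensional span of the all-ones vector 𝟙 ∈ ℝ^N, and let π be a row vector with πA = π and π𝟙 = 1. Let (B_n) be N×N real matrices such that n·B_n converges entrywise to a matrix B̃ with πB̃𝟙 ≠ 0, and let (V_n) be column vectors in ℝ^N such that n·V_n converges to a vector Ṽ. Then for all sufficiently large n the matrix I − A_n + B_n is invertible, and (I − A_n + B_n)^{−1} V_n converges, as n → ∞, to the vector ((πṼ)/(πB̃𝟙))·𝟙 (i.e., every component converges to the same scalar (πṼ)/(πB̃𝟙)). -/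

import Mathlib

/-!
Write `Q = 𝟙π`. The matrix `L = I - A + Q` is invertible: if `Lx = 0` then applying `π` gives
`πx = 0`, so `(I - A)x = 0`, so `x = c𝟙` with `c = πx = 0`; moreover `L𝟙 = 𝟙` and `πL⁻¹ = π`.
Hence `Gₙ = I - Aₙ + Bₙ + Q → L` is eventually invertible, and `I - Aₙ + Bₙ = Gₙ - 𝟙π` is a
rank-one update of it. Because `Aₙ𝟙 = 𝟙`, the Sherman–Morrison denominator is
`1 - πGₙ⁻¹𝟙 = πGₙ⁻¹Bₙ𝟙`, and the formula reads
`(I - Aₙ + Bₙ)⁻¹Vₙ = Gₙ⁻¹Vₙ + (πGₙ⁻¹Vₙ / πGₙ⁻¹Bₙ𝟙) • Gₙ⁻¹𝟙`.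
The first term tends to `0`, `Gₙ⁻¹𝟙 → 𝟙`, and after multiplying numerator and denominator by `n`
the ratio tends to `πṼ / πB̃𝟙` since `πGₙ⁻¹ → πL⁻¹ = π`.
-/

open Matrix Filter Topology

namespace Matrix

variable {ι K : Type*} [Fintype ι] [DecidableEq ι] [Field K]

-- The Sherman–Morrison formula for the rank-one update `G - u vᵀ`.
theorem sub_vecMulVec_mul_eq_one {G : Matrix ι ι K} (hG : IsUnit G.det) {u v : ι → K}
    (h : v ⬝ᵥ (G⁻¹ *ᵥ u) ≠ 1) :
    (G - vecMulVec u v) *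
      (G⁻¹ + (1 - v ⬝ᵥ (G⁻¹ *ᵥ u))⁻¹ • vecMulVec (G⁻¹ *ᵥ u) (v ᵥ* G⁻¹)) = 1 := by
  set s := v ⬝ᵥ (G⁻¹ *ᵥ u)
  have hcoef : (1 - s)⁻¹ - 1 - (1 - s)⁻¹ * s = 0 := by
    field_simp [sub_ne_zero.2 h.symm]
    ring
  rw [Matrix.sub_mul, Matrix.mul_add, Matrix.mul_add, mul_nonsing_inv G hG, Matrix.mul_smul,
    Matrix.mul_smul, mul_vecMulVec, vecMulVec_mul, vecMulVec_mul_vecMulVec, mulVec_mulVec,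
    mul_nonsing_inv G hG, one_mulVec, vecMulVec_smul, smul_smul]
  calc _ = 1 + ((1 - s)⁻¹ - 1 - (1 - s)⁻¹ * s) • vecMulVec u (v ᵥ* G⁻¹) := by module
    _ = 1 := by rw [hcoef, zero_smul, add_zero]

theorem inv_sub_vecMulVec_mulVec {G : Matrix ι ι K} (hG : IsUnit G.det) {u v : ι → K}
    (h : v ⬝ᵥ (G⁻¹ *ᵥ u) ≠ 1) (w : ι → K) :
    (G - vecMulVec u v)⁻¹ *ᵥ w =
      G⁻¹ *ᵥ w + (v ⬝ᵥ (G⁻¹ *ᵥ w) / (1 - v ⬝ᵥ (G⁻¹ *ᵥ u))) • (G⁻¹ *ᵥ u) := by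
  rw [inv_eq_right_inv (sub_vecMulVec_mul_eq_one hG h), add_mulVec, smul_mulVec,
    vecMulVec_mulVec, ← dotProduct_mulVec, op_smul_eq_smul, smul_smul, div_eq_inv_mul]

theorem isUnit_det_sub_vecMulVec {G : Matrix ι ι K} (hG : IsUnit G.det) {u v : ι → K}
    (h : v ⬝ᵥ (G⁻¹ *ᵥ u) ≠ 1) : IsUnit (G - vecMulVec u v).det :=
  isUnit_det_of_right_inverse (sub_vecMulVec_mul_eq_one hG h)

theorem isUnit_det_add_vecMulVec {M : Matrix ι ι K} {e π : ι → K}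
    (hker : ∀ x, M *ᵥ x = 0 → ∃ c : K, x = c • e) (hπM : π ᵥ* M = 0) (hπe : π ⬝ᵥ e = 1) :
    IsUnit (M + vecMulVec e π).det := by
  rw [isUnit_iff_ne_zero]
  intro hdet
  obtain ⟨x, hx0, hx⟩ := exists_mulVec_eq_zero_iff.2 hdet
  rw [add_mulVec, vecMulVec_mulVec, op_smul_eq_smul] at hx
  have hπx : π ⬝ᵥ x = 0 := by
    simpa [dotProduct_add, dotProduct_mulVec, hπM, hπe] using congrArg (π ⬝ᵥ ·) hx
  obtain ⟨c, rfl⟩ := hker x (by simpa [hπx] using hx)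
  rw [dotProduct_smul, hπe, smul_eq_mul, mul_one] at hπx
  exact hx0 (by rw [hπx, zero_smul])

theorem inv_mulVec_eq_self {L : Matrix ι ι K} (hL : IsUnit L.det) {e : ι → K}
    (he : L *ᵥ e = e) : L⁻¹ *ᵥ e = e := by
  conv_lhs => rw [← he, mulVec_mulVec, nonsing_inv_mul L hL, one_mulVec]

theorem vecMul_inv_eq_self {L : Matrix ι ι K} (hL : IsUnit L.det) {π : ι → K}
    (hπ : π ᵥ* L = π) : π ᵥ* L⁻¹ = π := by
  conv_lhs => rw [← hπ, vecMul_vecMul, mul_nonsing_inv L hL, vecMul_one]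

theorem inv_add_vecMulVec_mulVec_eq_self {M : Matrix ι ι K} {e π : ι → K}
    (hL : IsUnit (M + vecMulVec e π).det) (hMe : M *ᵥ e = 0) (hπe : π ⬝ᵥ e = 1) :
    (M + vecMulVec e π)⁻¹ *ᵥ e = e := by
  have hLe : (M + vecMulVec e π) *ᵥ e = e := by
    rw [add_mulVec, hMe, vecMulVec_mulVec, op_smul_eq_smul, hπe, one_smul, zero_add]
  exact inv_mulVec_eq_self hL hLe

theorem vecMul_inv_add_vecMulVec_eq_self {M : Matrix ι ι K} {e π : ι → K}
    (hL : IsUnit (M + vecMulVec e π).det) (hπM : π ᵥ* M = 0) (hπe : π ⬝ᵥ e = 1) :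
    π ᵥ* (M + vecMulVec e π)⁻¹ = π := by
  have hπL : π ᵥ* (M + vecMulVec e π) = π := by
    rw [vecMul_add, hπM, vecMul_vecMulVec, hπe, one_smul, zero_add]
  exact vecMul_inv_eq_self hL hπL

theorem one_sub_dotProduct_inv_add_vecMulVec_mulVec {M : Matrix ι ι K} {e π : ι → K}
    (hG : IsUnit (M + vecMulVec e π).det) (hπe : π ⬝ᵥ e = 1) :
    1 - π ⬝ᵥ ((M + vecMulVec e π)⁻¹ *ᵥ e) = π ⬝ᵥ ((M + vecMulVec e π)⁻¹ *ᵥ (M *ᵥ e)) := by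
  have hGe : (M + vecMulVec e π) *ᵥ e = M *ᵥ e + e := by
    rw [add_mulVec, vecMulVec_mulVec, op_smul_eq_smul, hπe, one_smul]
  rw [sub_eq_iff_eq_add, ← dotProduct_add, ← mulVec_add, ← hGe, mulVec_mulVec,
    nonsing_inv_mul _ hG, one_mulVec, hπe]

theorem isUnit_det_of_isUnit_det_add_vecMulVec {M : Matrix ι ι K} {e π : ι → K}
    (hG : IsUnit (M + vecMulVec e π).det) (hπe : π ⬝ᵥ e = 1)
    (ht : π ⬝ᵥ ((M + vecMulVec e π)⁻¹ *ᵥ (M *ᵥ e)) ≠ 0) : IsUnit M.det := by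
  rw [← one_sub_dotProduct_inv_add_vecMulVec_mulVec hG hπe, sub_ne_zero] at ht
  simpa using isUnit_det_sub_vecMulVec hG ht.symm

theorem inv_mulVec_eq_of_isUnit_det_add_vecMulVec {M : Matrix ι ι K} {e π : ι → K}
    (hG : IsUnit (M + vecMulVec e π).det) (hπe : π ⬝ᵥ e = 1)
    (ht : π ⬝ᵥ ((M + vecMulVec e π)⁻¹ *ᵥ (M *ᵥ e)) ≠ 0) (w : ι → K) :
    M⁻¹ *ᵥ w = (M + vecMulVec e π)⁻¹ *ᵥ w +
      (π ⬝ᵥ ((M + vecMulVec e π)⁻¹ *ᵥ w) / π ⬝ᵥ ((M + vecMulVec e π)⁻¹ *ᵥ (M *ᵥ e))) •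
        ((M + vecMulVec e π)⁻¹ *ᵥ e) := by
  rw [← one_sub_dotProduct_inv_add_vecMulVec_mulVec hG hπe] at ht ⊢
  rw [sub_ne_zero] at ht
  simpa using inv_sub_vecMulVec_mulVec hG ht.symm w

end Matrix

section Limits

variable {α ι R : Type*} [Fintype ι] [TopologicalSpace R] {l : Filter α}

theorem Filter.Tendsto.matrix_mulVec {κ : Type*} [NonUnitalNonAssocSemiring R] [ContinuousAdd R]
    [ContinuousMul R] {M : α → Matrix κ ι R} {v : α → ι → R} {M₀ : Matrix κ ι R} {v₀ : ι → R}
    (hM : Tendsto M l (𝓝 M₀)) (hv : Tendsto v l (𝓝 v₀)) :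
    Tendsto (fun a => M a *ᵥ v a) l (𝓝 (M₀ *ᵥ v₀)) :=
  ((continuous_fst.matrix_mulVec continuous_snd).tendsto (M₀, v₀)).comp (hM.prodMk_nhds hv)

theorem Filter.Tendsto.dotProduct [Mul R] [AddCommMonoid R] [ContinuousAdd R] [ContinuousMul R]
    {v w : α → ι → R} {v₀ w₀ : ι → R} (hv : Tendsto v l (𝓝 v₀)) (hw : Tendsto w l (𝓝 w₀)) :
    Tendsto (fun a => v a ⬝ᵥ w a) l (𝓝 (v₀ ⬝ᵥ w₀)) :=
  ((continuous_fst.dotProduct continuous_snd).tendsto (v₀, w₀)).comp (hv.prodMk_nhds hw)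

theorem Filter.Tendsto.matrix_inv [DecidableEq ι] [Field R]
    [IsTopologicalDivisionRing R] {G : α → Matrix ι ι R} {L : Matrix ι ι R}
    (hG : Tendsto G l (𝓝 L)) (hL : IsUnit L.det) : Tendsto (fun a => (G a)⁻¹) l (𝓝 L⁻¹) := by
  refine (continuousAt_matrix_inv L ?_).tendsto.comp hG
  rw [Ring.inverse_eq_inv']
  exact continuousAt_inv₀ hL.ne_zero

theorem tendsto_zero_of_tendsto_natCast_smul {E : Type*} [AddCommGroup E] [Module ℝ E]
    [TopologicalSpace E] [ContinuousSMul ℝ E] {x : ℕ → E} {y : E}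
    (h : Tendsto (fun n : ℕ => (n : ℝ) • x n) atTop (𝓝 y)) : Tendsto x atTop (𝓝 0) := by
  have h0 := ((tendsto_inv_atTop_zero (𝕜 := ℝ)).comp tendsto_natCast_atTop_atTop).smul h
  rw [zero_smul] at h0
  refine h0.congr' ?_
  filter_upwards [eventually_ne_atTop 0] with n hn
  simp [smul_smul, hn]

end Limits

section Perturbation

variable {ι : Type*} [Fintype ι] [DecidableEq ι]

theorem tendsto_natCast_mul_dotProduct_inv_mulVec {G : ℕ → Matrix ι ι ℝ} {L : Matrix ι ι ℝ}
    {π : ι → ℝ} (hG : Tendsto G atTop (𝓝 L)) (hL : IsUnit L.det) (hπL : π ᵥ* L⁻¹ = π)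
    {x : ℕ → ι → ℝ} {x₀ : ι → ℝ}
    (hx : Tendsto (fun n : ℕ => (n : ℝ) • x n) atTop (𝓝 x₀)) :
    Tendsto (fun n : ℕ => (n : ℝ) * (π ⬝ᵥ ((G n)⁻¹ *ᵥ x n))) atTop (𝓝 (π ⬝ᵥ x₀)) := by
  have hlim := (tendsto_const_nhds (x := π)).dotProduct ((hG.matrix_inv hL).matrix_mulVec hx)
  rw [dotProduct_mulVec, hπL] at hlim
  simpa only [mulVec_smul, dotProduct_smul, smul_eq_mul] using hlim

theorem tendsto_inv_one_sub_add_mulVec {A : ℕ → Matrix ι ι ℝ} {A₀ : Matrix ι ι ℝ}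
    {B : ℕ → Matrix ι ι ℝ} {B₀ : Matrix ι ι ℝ} {V : ℕ → ι → ℝ} {V₀ : ι → ℝ} {π : ι → ℝ}
    (hA1 : ∀ n, A n *ᵥ 1 = 1) (hA : Tendsto A atTop (𝓝 A₀))
    (hker : ∀ x, (1 - A₀) *ᵥ x = 0 → ∃ c : ℝ, x = c • 1) (hπA : π ᵥ* A₀ = π)
    (hπ1 : π ⬝ᵥ 1 = 1) (hB : Tendsto (fun n : ℕ => (n : ℝ) • B n) atTop (𝓝 B₀))
    (hB₀ : π ⬝ᵥ (B₀ *ᵥ 1) ≠ 0) (hV : Tendsto (fun n : ℕ => (n : ℝ) • V n) atTop (𝓝 V₀)) :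
    (∀ᶠ n in atTop, IsUnit (1 - A n + B n).det) ∧
      Tendsto (fun n => (1 - A n + B n)⁻¹ *ᵥ V n) atTop
        (𝓝 ((π ⬝ᵥ V₀ / π ⬝ᵥ (B₀ *ᵥ 1)) • 1)) := by
  set M := fun n => 1 - A n + B n
  set Q := vecMulVec 1 π
  set L := 1 - A₀ + Q
  set G := fun n => M n + Q
  have hA₀1 : (1 - A₀) *ᵥ 1 = 0 := by
    have h : A₀ *ᵥ 1 = 1 := tendsto_nhds_unique (hA.matrix_mulVec tendsto_const_nhds)
      (by simp only [hA1]; exact tendsto_const_nhds)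
    rw [sub_mulVec, one_mulVec, h, sub_self]
  have hπA₀ : π ᵥ* (1 - A₀) = 0 := by rw [vecMul_sub, vecMul_one, hπA, sub_self]
  have hL : IsUnit L.det := isUnit_det_add_vecMulVec hker hπA₀ hπ1
  have hG : Tendsto G atTop (𝓝 L) := by
    simpa using ((tendsto_const_nhds.sub hA).add
      (tendsto_zero_of_tendsto_natCast_smul hB)).add (tendsto_const_nhds (x := Q))
  have hGunit : ∀ᶠ n in atTop, IsUnit (G n).det :=
    ((continuous_id.matrix_det.tendsto L).comp hG |>.eventually_ne hL.ne_zero).mono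
      fun n hn => isUnit_iff_ne_zero.2 hn
  have hπL : π ᵥ* L⁻¹ = π := vecMul_inv_add_vecMulVec_eq_self hL hπA₀ hπ1
  have hM1 : ∀ n, M n *ᵥ 1 = B n *ᵥ 1 := fun n => by
    rw [add_mulVec, sub_mulVec, one_mulVec, hA1, sub_self, zero_add]
  have hBt := tendsto_natCast_mul_dotProduct_inv_mulVec hG hL hπL (x := fun n => M n *ᵥ 1)
    (by simpa only [hM1, smul_mulVec] using hB.matrix_mulVec tendsto_const_nhds)
  have hratio : Tendsto (fun n => π ⬝ᵥ ((G n)⁻¹ *ᵥ V n) / π ⬝ᵥ ((G n)⁻¹ *ᵥ (M n *ᵥ 1))) atTop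
      (𝓝 (π ⬝ᵥ V₀ / π ⬝ᵥ (B₀ *ᵥ 1))) := by
    refine ((tendsto_natCast_mul_dotProduct_inv_mulVec hG hL hπL hV).div hBt hB₀).congr' ?_
    filter_upwards [eventually_ne_atTop 0] with n hn
    exact mul_div_mul_left _ _ (Nat.cast_ne_zero.2 hn)
  have hsm : ∀ᶠ n in atTop, IsUnit (M n).det ∧ (M n)⁻¹ *ᵥ V n = (G n)⁻¹ *ᵥ V n +
      (π ⬝ᵥ ((G n)⁻¹ *ᵥ V n) / π ⬝ᵥ ((G n)⁻¹ *ᵥ (M n *ᵥ 1))) • ((G n)⁻¹ *ᵥ 1) := by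
    filter_upwards [hGunit, hBt.eventually_ne hB₀] with n hGn htn
    exact ⟨isUnit_det_of_isUnit_det_add_vecMulVec hGn hπ1 (right_ne_zero_of_mul htn),
      inv_mulVec_eq_of_isUnit_det_add_vecMulVec hGn hπ1 (right_ne_zero_of_mul htn) _⟩
  refine ⟨hsm.mono fun n h => h.1, ?_⟩
  have hGinv := hG.matrix_inv hL
  have hlim := (hGinv.matrix_mulVec (tendsto_zero_of_tendsto_natCast_smul hV)).add
    (hratio.smul (hGinv.matrix_mulVec (tendsto_const_nhds (x := (1 : ι → ℝ)))))
  rw [mulVec_zero, inv_add_vecMulVec_mulVec_eq_self hL hA₀1 hπ1, zero_add] at hlim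
  exact hlim.congr' (hsm.mono fun n h => h.2.symm)

end Perturbation

theorem stochastic_matrix_resolvent_limit'_general
    (N : ℕ)
    (A : ℕ → Matrix (Fin N) (Fin N) ℝ) (Alim : Matrix (Fin N) (Fin N) ℝ)
    (hAstoch : ∀ n, (∀ i j, 0 ≤ A n i j) ∧ ∀ i, ∑ j, A n i j = 1)
    (hAconv : ∀ i j, Tendsto (fun n => A n i j) atTop (𝓝 (Alim i j)))
    (hker : ∀ x : Fin N → ℝ, (1 - Alim) *ᵥ x = 0 ↔ ∃ c : ℝ, x = fun _ => c)
    (π : Fin N → ℝ) (hπA : π ᵥ* Alim = π) (hπ1 : π ⬝ᵥ (fun _ => (1 : ℝ)) = 1)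
    (B : ℕ → Matrix (Fin N) (Fin N) ℝ) (Bt : Matrix (Fin N) (Fin N) ℝ)
    (hB : ∀ i j, Tendsto (fun n : ℕ => (n : ℝ) * B n i j) atTop (𝓝 (Bt i j)))
    (hBt : π ⬝ᵥ (Bt *ᵥ fun _ => (1 : ℝ)) ≠ 0)
    (V : ℕ → Fin N → ℝ) (Vt : Fin N → ℝ)
    (hV : ∀ i, Tendsto (fun n : ℕ => (n : ℝ) * V n i) atTop (𝓝 (Vt i))) :
    (∃ n₀ : ℕ, ∀ n ≥ n₀, IsUnit (1 - A n + B n).det) ∧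
    ∀ i, Tendsto (fun n => ((1 - A n + B n)⁻¹ *ᵥ V n) i) atTop
      (𝓝 ((π ⬝ᵥ Vt) / (π ⬝ᵥ (Bt *ᵥ fun _ => (1 : ℝ))))) := by
  have hA1 : ∀ n, A n *ᵥ 1 = 1 := fun n => funext fun i => by
    simpa [mulVec, dotProduct] using (hAstoch n).2 i
  have hker' : ∀ x, (1 - Alim) *ᵥ x = 0 → ∃ c : ℝ, x = c • 1 := fun x hx =>
    ((hker x).1 hx).imp fun c hc => by rw [hc]; ext; simp
  obtain ⟨hunit, hlim⟩ := tendsto_inv_one_sub_add_mulVec hA1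
    (tendsto_pi_nhds.2 fun i => tendsto_pi_nhds.2 (hAconv i)) hker' hπA hπ1
    (tendsto_pi_nhds.2 fun i => tendsto_pi_nhds.2 (hB i)) hBt (tendsto_pi_nhds.2 hV)
  refine ⟨eventually_atTop.1 hunit, fun i => ?_⟩
  have hlim_i := tendsto_pi_nhds.1 hlim i
  rw [Pi.smul_apply, Pi.one_apply, smul_eq_mul, mul_one] at hlim_i
  exact hlim_i

/-- STATEMENT 0: limit of `(I - Aₙ + Bₙ)⁻¹ Vₙ` for row-stochastic `Aₙ → A` with
one-dimensional kernel of `I - A`, `n·Bₙ → B̃` with `π B̃ 𝟙 ≠ 0`, and `n·Vₙ → Ṽ`. -/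
theorem stochastic_matrix_resolvent_limit'
    (N : ℕ) (hN : 1 ≤ N)
    (A : ℕ → Matrix (Fin N) (Fin N) ℝ) (Alim : Matrix (Fin N) (Fin N) ℝ)
    (hAstoch : ∀ n, (∀ i j, 0 ≤ A n i j) ∧ ∀ i, ∑ j, A n i j = 1)
    (hAlimstoch : (∀ i j, 0 ≤ Alim i j) ∧ ∀ i, ∑ j, Alim i j = 1)
    (hAconv : ∀ i j, Tendsto (fun n => A n i j) atTop (𝓝 (Alim i j)))
    (hker : ∀ x : Fin N → ℝ, (1 - Alim) *ᵥ x = 0 ↔ ∃ c : ℝ, x = fun _ => c)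
    (π : Fin N → ℝ) (hπA : π ᵥ* Alim = π) (hπ1 : π ⬝ᵥ (fun _ => (1 : ℝ)) = 1)
    (B : ℕ → Matrix (Fin N) (Fin N) ℝ) (Bt : Matrix (Fin N) (Fin N) ℝ)
    (hB : ∀ i j, Tendsto (fun n : ℕ => (n : ℝ) * B n i j) atTop (𝓝 (Bt i j)))
    (hBt : π ⬝ᵥ (Bt *ᵥ fun _ => (1 : ℝ)) ≠ 0)
    (V : ℕ → Fin N → ℝ) (Vt : Fin N → ℝ)
    (hV : ∀ i, Tendsto (fun n : ℕ => (n : ℝ) * V n i) atTop (𝓝 (Vt i))) :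
    (∃ n₀ : ℕ, ∀ n ≥ n₀, IsUnit (1 - A n + B n).det) ∧
    ∀ i, Tendsto (fun n => ((1 - A n + B n)⁻¹ *ᵥ V n) i) atTop
      (𝓝 ((π ⬝ᵥ Vt) / (π ⬝ᵥ (Bt *ᵥ fun _ => (1 : ℝ))))) :=
  stochastic_matrix_resolvent_limit'_general N A Alim hAstoch hAconv hker π hπA hπ1 B Bt hB hBt V Vt
    hV
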